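/- arXiv:0904.0768 — 3 statements merged into one kernel-verified Lean document; each statement's English description precedes it below -/
import Mathlib

section
/- Let G be a Tanner graph (bipartite graph with bit nodes V^b and check nodes V^c) defining a binary linear code of minimum distance d. If a subset S of check nodes satisfies |I(S)| > |S|, where I(S) is the set of bit nodes all of whose neighbors lie in S, then d ≤ |S| + 1. -/
/-!
Pick `|S| + 1` bit nodes `T ⊆ I(S)`. Their columns of `H` vanish outside the rows in `S`, so they
are `|S| + 1` vectors in a space of dimension `|S|` and hence linearly dependent. A nontrivial
dependency is a nonzero codeword supported on `T`, of weight at most `|S| + 1`.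
-/

open Finset

/-- Hamming weight of a binary vector. -/
def wt {n : ℕ} (x : Fin n → ZMod 2) : ℕ := (univ.filter (fun i => x i ≠ 0)).card

/-- The neighborhood of bit node `b` in the Tanner graph of `H`: the set of check
nodes adjacent to `b` (support of the `b`-th column). -/
def colSupp {m n : ℕ} (H : Matrix (Fin m) (Fin n) (ZMod 2)) (b : Fin n) : Finset (Fin m) :=
  univ.filter (fun c => H c b ≠ 0)

/-- `d` is the minimum distance of the binary linear code with parity-check matrix `H`. -/
def IsMinDist {m n : ℕ} (H : Matrix (Fin m) (Fin n) (ZMod 2)) (d : ℕ) : Prop :=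
  (∃ x : Fin n → ZMod 2, x ≠ 0 ∧ H.mulVec x = 0 ∧ wt x = d) ∧
  ∀ x : Fin n → ZMod 2, x ≠ 0 → H.mulVec x = 0 → d ≤ wt x

namespace Matrix

theorem mulVec_eq_zero_of_support_subset {R ι κ : Type*} [Semiring R] [Fintype κ]
    {H : Matrix ι κ R} {S : Finset ι} {T : Finset κ} (hH : ∀ b ∈ T, ∀ c ∉ S, H c b = 0)
    {x : κ → R} (hx : ∀ j, x j ≠ 0 → j ∈ T) (hxS : ∀ c ∈ S, (H *ᵥ x) c = 0) :
    H *ᵥ x = 0 := by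
  funext c
  by_cases hc : c ∈ S
  · exact hxS c hc
  · refine sum_eq_zero fun j _ => ?_
    by_cases hj : x j = 0
    · simp [hj]
    · simp [hH j (hx j hj) c hc]

variable {K ι κ : Type*} [Field K] [Fintype ι] [Fintype κ]

theorem exists_ne_zero_mulVec_eq_zero_of_card_lt {H : Matrix ι κ K} {S : Finset ι}
    {T : Finset κ} (hH : ∀ b ∈ T, ∀ c ∉ S, H c b = 0) (hST : #S < #T) :
    ∃ x : κ → K, x ≠ 0 ∧ H *ᵥ x = 0 ∧ ∀ j, x j ≠ 0 → j ∈ T := by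
  let extend := Function.ExtendByZero.linearMap K ((↑) : T → κ)
  let f := LinearMap.funLeft K K ((↑) : S → ι) ∘ₗ H.mulVecLin ∘ₗ extend
  obtain ⟨y, hy, hy0⟩ := Submodule.ne_bot_iff _ |>.mp <| f.ker_ne_bot_of_finrank_lt <| by
    simpa [Module.finrank_fintype_fun_eq_card] using hST
  have hsupp : ∀ j, extend y j ≠ 0 → j ∈ T := fun j hj => by
    by_contra hjT
    exact hj <| Function.extend_apply' _ _ _ fun ⟨b, hb⟩ => hjT (hb ▸ b.2)
  refine ⟨extend y, ?_, mulVec_eq_zero_of_support_subset hH hsupp fun c hc => ?_, hsupp⟩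
  · exact (map_ne_zero_iff extend <|
      Function.extend_injective Subtype.val_injective (0 : κ → K)).mpr hy0
  · exact congrFun (LinearMap.mem_ker.mp hy) ⟨c, hc⟩

end Matrix

theorem wt_le_card_of_support_subset {n : ℕ} {x : Fin n → ZMod 2} {T : Finset (Fin n)}
    (hx : ∀ j, x j ≠ 0 → j ∈ T) : wt x ≤ #T :=
  card_le_card fun j hj => hx j (mem_filter.mp hj).2

/-- If a subset `S` of check nodes induces more than `|S|` bit nodes
(bit nodes all of whose neighbors lie in `S`), then `d ≤ |S| + 1`. -/
theorem stmt_0 {m n : ℕ} (H : Matrix (Fin m) (Fin n) (ZMod 2)) (d : ℕ)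
    (hd : IsMinDist H d) (S : Finset (Fin m))
    (hS : S.card < (univ.filter (fun b => colSupp H b ⊆ S)).card) :
    d ≤ S.card + 1 := by
  obtain ⟨T, hTS, hT⟩ := exists_subset_card_eq hS
  have hH : ∀ b ∈ T, ∀ c ∉ S, H c b = 0 := fun b hb c hc => by
    by_contra hcb
    exact hc <| (mem_filter.mp (hTS hb)).2 (by simpa [colSupp] using hcb)
  obtain ⟨x, hx0, hHx, hxT⟩ := H.exists_ne_zero_mulVec_eq_zero_of_card_lt hH (by omega)
  calc d ≤ wt x := hd.2 x hx0 hHx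
    _ ≤ #T := wt_le_card_of_support_subset hxT
    _ = #S + 1 := hT
end

section
/- Let D be a connected graph in which every vertex has degree at most 3, and let U be a proper subset of vertices of D inducing a connected subgraph D_U. Then there exists an ordering u_1, …, u_k of U such that for each i, the subgraph induced by {u_1, …, u_i} is connected and the degree of u_i within it is at most 2, provided D has no cut edges. -/
/-!
The order is built backwards: it suffices that every connected proper vertex set `W` with at
least two vertices contains a vertex `w` with at most two neighbours in `W` such that `D[W \ {w}]`
is still connected. This is proved in the stronger form where `w` must avoid a prescribed
`u ∈ W`, by induction on `|W|`. Since `D` is connected and bridgeless, every nonempty proper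
vertex set is left by at least two edges. If every vertex of `W` other than `u` had three
neighbours in `W`, all edges leaving `W` and all edges leaving `W \ {u}` would be incident to `u`,
so `u` would have four neighbours. Hence some `w₀ ≠ u` has at most two neighbours in `W`. If `w₀`
cuts `D[W]`, apply the induction hypothesis to `{w₀} ∪ C`, for a component `C` of `D[W \ {w₀}]`
avoiding `u`, with `w₀` as the vertex to avoid: since `C` meets the rest of `W` only in `w₀`, the
vertex found works for `W` as well.
-/

open Finset

namespace SimpleGraph

variable {V : Type*} {D : SimpleGraph V}

def ReachableIn (D : SimpleGraph V) (W : Set V) : V → V → Prop :=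
  Relation.ReflTransGen fun a b => a ∈ W ∧ b ∈ W ∧ D.Adj a b

def ConnectedIn (D : SimpleGraph V) (W : Set V) : Prop :=
  W.Nonempty ∧ ∀ x ∈ W, ∀ y ∈ W, D.ReachableIn W x y

namespace ReachableIn

variable {W S C : Set V} {x y z w₀ : V}

lemma refl : D.ReachableIn W x x := Relation.ReflTransGen.refl

lemma tail (h : D.ReachableIn W x y) (hy : y ∈ W) (hz : z ∈ W) (hyz : D.Adj y z) :
    D.ReachableIn W x z :=
  Relation.ReflTransGen.tail h ⟨hy, hz, hyz⟩

lemma trans (h : D.ReachableIn W x y) (h' : D.ReachableIn W y z) : D.ReachableIn W x z :=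
  Relation.ReflTransGen.trans h h'

lemma symm (h : D.ReachableIn W x y) : D.ReachableIn W y x := by
  induction h with
  | refl => exact refl
  | tail _ hbc ih => exact Relation.ReflTransGen.head ⟨hbc.2.1, hbc.1, hbc.2.2.symm⟩ ih

lemma mono (hWS : W ⊆ S) (h : D.ReachableIn W x y) : D.ReachableIn S x y :=
  Relation.ReflTransGen.mono (fun _ _ hab => ⟨hWS hab.1, hWS hab.2.1, hab.2.2⟩) _ _ h

lemma of_closed (hS : ∀ p ∈ S, ∀ q ∈ W, D.Adj p q → q ∈ S) (hx : x ∈ S)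
    (h : D.ReachableIn W x y) : D.ReachableIn S x y ∧ y ∈ S := by
  induction h with
  | refl => exact ⟨refl, hx⟩
  | tail _ hbc ih =>
    have hc := hS _ ih.2 _ hbc.2.1 hbc.2.2
    exact ⟨ih.1.tail ih.2 hc hbc.2.2, hc⟩

lemma exists_adj_of_mem_of_notMem (h : D.ReachableIn W x y) (hx : x ∈ S) (hy : y ∉ S) :
    ∃ p ∈ S, ∃ q ∈ W, q ∉ S ∧ D.Adj p q := by
  by_contra! hS
  exact hy (of_closed (fun p hp q hq hpq => by_contra fun hqS => hS p hp q hq hqS hpq) hx h).2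

lemma sdiff_of_closed (hC : ∀ p ∈ C, ∀ q ∈ W, q ≠ w₀ → D.Adj p q → q ∈ C)
    (h : D.ReachableIn W w₀ y) (hy : y ∉ C) : D.ReachableIn (W \ C) w₀ y := by
  induction h with
  | refl => exact refl
  | @tail b c _ hbc ih =>
    by_cases hc : c = w₀
    · exact hc ▸ refl
    have hb : b ∉ C := fun hb => hy (hC b hb c hbc.2.1 hc hbc.2.2)
    exact (ih hb).tail ⟨hbc.1, hb⟩ ⟨hbc.2.1, hy⟩ hbc.2.2

end ReachableIn

lemma connectedIn_of_forall_reachableIn {W : Set V} {x : V} (hx : x ∈ W)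
    (h : ∀ y ∈ W, D.ReachableIn W y x) : D.ConnectedIn W :=
  ⟨⟨x, hx⟩, fun y hy z hz => (h y hy).trans (h z hz).symm⟩

lemma connectedIn_iff_connected_induce {W : Set V} :
    D.ConnectedIn W ↔ (D.induce W).Connected := by
  constructor
  · rintro ⟨⟨x, hx⟩, h⟩
    have key : ∀ {y z}, D.ReachableIn W y z → ∀ (hy : y ∈ W) (hz : z ∈ W),
        (D.induce W).Reachable ⟨y, hy⟩ ⟨z, hz⟩ := by
      intro y z hyz
      induction hyz with
      | refl => exact fun _ _ => Reachable.refl _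
      | tail _ hbc ih => exact fun hy _ => (ih hy hbc.1).trans (Adj.reachable hbc.2.2)
    have : Nonempty W := ⟨⟨x, hx⟩⟩
    exact ⟨fun ⟨y, hy⟩ ⟨z, hz⟩ => key (h y hy z hz) hy hz⟩
  · intro h
    obtain ⟨x, hx⟩ := h.nonempty
    refine ⟨⟨x, hx⟩, fun y hy z hz => ?_⟩
    have := (reachable_iff_reflTransGen _ _).1 (h.preconnected ⟨y, hy⟩ ⟨z, hz⟩)
    exact this.lift Subtype.val fun a b hab => ⟨a.2, b.2, hab⟩

lemma exists_two_adj_notMem (hconn : D.Connected) (hbridge : ∀ e ∈ D.edgeSet, ¬ D.IsBridge e)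
    {S : Set V} {x y : V} (hx : x ∈ S) (hy : y ∉ S) (hS : ∀ a ∈ S, ∀ b ∉ S, D.Adj a b → a = x) :
    ∃ b₁ b₂, b₁ ∉ S ∧ b₂ ∉ S ∧ b₁ ≠ b₂ ∧ D.Adj x b₁ ∧ D.Adj x b₂ := by
  obtain ⟨⟨⟨a, b₁⟩, hab₁⟩, -, ha, hb₁⟩ := (hconn x y).some.exists_boundary_dart S hx hy
  obtain rfl : a = x := hS a ha b₁ hb₁ hab₁
  have hreach : (D.deleteEdges {s(a, b₁)}).Reachable a b₁ := by
    simpa [isBridge_iff] using hbridge s(a, b₁) hab₁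
  obtain ⟨⟨⟨a', b₂⟩, hab₂⟩, -, ha', hb₂⟩ := hreach.some.exists_boundary_dart S hx hb₁
  rw [deleteEdges_adj] at hab₂
  obtain rfl : a' = a := hS a' ha' b₂ hb₂ hab₂.1
  refine ⟨b₁, b₂, hb₁, hb₂, fun h => hab₂.2 ?_, hab₁, hab₂.1⟩
  simp [h]

def IsBuildOrder (D : SimpleGraph V) [DecidableRel D.Adj] (l : List V) : Prop :=
  ∀ i (hi : i < l.length), (D.induce {v | v ∈ l.take (i + 1)}).Connected ∧
    ((l.take i).filter (fun w => D.Adj (l.get ⟨i, hi⟩) w)).length ≤ 2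

section BuildOrder

variable [DecidableRel D.Adj]

lemma isBuildOrder_nil : D.IsBuildOrder [] := fun _ hi => absurd hi (Nat.not_lt_zero _)

variable [DecidableEq V]

lemma IsBuildOrder.append_singleton {l : List V} {w : V} (hl : D.IsBuildOrder l)
    (hconn : D.ConnectedIn (l ++ [w]).toFinset)
    (hdeg : (l.filter (fun x => D.Adj w x)).length ≤ 2) : D.IsBuildOrder (l ++ [w]) := by
  intro i hi
  rw [List.length_append, List.length_singleton] at hi
  rcases (Nat.lt_succ_iff.mp hi).lt_or_eq with hi | rfl
  · rw [List.take_append_of_le_length hi, List.take_append_of_le_length hi.le]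
    simpa [List.getElem_append_left hi] using hl i hi
  · rw [List.take_of_length_le (by simp), List.take_append_of_le_length le_rfl, List.take_length]
    rw [List.coe_toFinset, connectedIn_iff_connected_induce] at hconn
    simpa using ⟨hconn, hdeg⟩

end BuildOrder

section Pendant

variable [DecidableEq V]

lemma exists_pendant_of_not_connectedIn_erase {W : Finset V} {w₀ u : V} (hW : D.ConnectedIn W)
    (hw₀ : w₀ ∈ W) (hu : u ∈ W) (huw₀ : u ≠ w₀) (hcut : ¬ D.ConnectedIn (W.erase w₀)) :
    ∃ C ⊆ W.erase w₀, u ∉ C ∧ C.Nonempty ∧ (∀ p ∈ C, ∀ q ∈ W, q ≠ w₀ → D.Adj p q → q ∈ C) ∧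
      D.ConnectedIn (insert w₀ C : Finset V) := by
  classical
  have hu' : u ∈ W.erase w₀ := mem_erase.mpr ⟨huw₀, hu⟩
  obtain ⟨x, hx, hux⟩ : ∃ x ∈ W.erase w₀, ¬ D.ReachableIn (W.erase w₀) u x := by
    by_contra! h
    exact hcut (connectedIn_of_forall_reachableIn hu' fun y hy => (h y hy).symm)
  set C := {z ∈ W.erase w₀ | D.ReachableIn (W.erase w₀) x z}
  have hxC : x ∈ C := mem_filter.mpr ⟨hx, .refl⟩
  have hclosed : ∀ p ∈ C, ∀ q ∈ W.erase w₀, D.Adj p q → q ∈ C := fun p hp q hq hpq =>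
    mem_filter.mpr ⟨hq, (mem_filter.mp hp).2.tail (mem_filter.mp hp).1 hq hpq⟩
  have hw₀C : w₀ ∉ C := fun h => (mem_erase.mp (mem_filter.mp h).1).1 rfl
  obtain ⟨p, hpC, q, hqW, hqC, hpq⟩ :=
    (hW.2 x (mem_of_mem_erase hx) w₀ hw₀).exists_adj_of_mem_of_notMem hxC hw₀C
  have hpw₀ : D.Adj p w₀ := by
    by_contra hpw₀
    exact hqC (hclosed p hpC q (mem_erase.mpr ⟨fun h => hpw₀ (h ▸ hpq), hqW⟩) hpq)
  refine ⟨C, filter_subset _ _, fun h => hux (mem_filter.mp h).2.symm, ⟨x, hxC⟩,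
    fun p hp q hqW hq => hclosed p hp q (mem_erase.mpr ⟨hq, hqW⟩),
    connectedIn_of_forall_reachableIn (mem_insert_self w₀ C) fun y hy => ?_⟩
  rcases mem_insert.mp hy with rfl | hyC
  · exact .refl
  have hyp : D.ReachableIn (W.erase w₀) y p :=
    (mem_filter.mp hyC).2.symm.trans (mem_filter.mp hpC).2
  exact ((hyp.of_closed hclosed hyC).1.mono (by simp)).tail (by simp [hpC]) (by simp) hpw₀

lemma connectedIn_erase_of_pendant {W C : Finset V} {w₀ w : V} (hW : D.ConnectedIn W)
    (hw₀ : w₀ ∈ W) (hCW : C ⊆ W.erase w₀) (hC : ∀ p ∈ C, ∀ q ∈ W, q ≠ w₀ → D.Adj p q → q ∈ C)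
    (hw : w ∈ C) (hCw : D.ConnectedIn ((insert w₀ C).erase w : Finset V)) :
    D.ConnectedIn (W.erase w : Finset V) := by
  have hw₀w : w₀ ≠ w := fun h => (mem_erase.mp (hCW (h ▸ hw))).1 rfl
  refine connectedIn_of_forall_reachableIn (mem_erase.mpr ⟨hw₀w, hw₀⟩) fun y hy => ?_
  obtain ⟨hyw, hyW⟩ := mem_erase.mp hy
  by_cases hyC : y ∈ C
  · refine (hCw.2 y ?_ w₀ ?_).mono ?_
    · simp [hyw, hyC]
    · simp [hw₀w]
    · exact coe_subset.mpr
        (erase_subset_erase _ (insert_subset hw₀ (hCW.trans (erase_subset _ _))))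
  · refine ((hW.2 w₀ hw₀ y hyW).sdiff_of_closed hC hyC).symm.mono fun z hz => ?_
    simp only [Set.mem_sdiff, mem_coe] at hz
    exact mem_erase.mpr ⟨fun h => hz.2 (h ▸ hw), hz.1⟩

end Pendant

section Fintype

variable [Fintype V] [DecidableRel D.Adj]

lemma mem_of_adj_of_degree_le {W : Finset V} {v z : V} (hv : D.degree v ≤ #{x ∈ W | D.Adj v x})
    (hvz : D.Adj v z) : z ∈ W := by
  have hsub : {x ∈ W | D.Adj v x} ⊆ D.neighborFinset v := fun x hx => by
    simpa using (mem_filter.mp hx).2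
  rw [← card_neighborFinset_eq_degree] at hv
  have hz : z ∈ {x ∈ W | D.Adj v x} := by
    rw [eq_of_subset_of_card_le hsub hv]
    simpa using hvz
  exact (mem_filter.mp hz).1

variable [DecidableEq V]

lemma exists_ne_card_filter_adj_le_two (hconn : D.Connected) (hdeg : ∀ v, D.degree v ≤ 3)
    (hbridge : ∀ e ∈ D.edgeSet, ¬ D.IsBridge e) {W : Finset V} (hW : W ≠ univ) {u v : V}
    (hu : u ∈ W) (hv : v ∈ W) (hvu : v ≠ u) : ∃ w ∈ W, w ≠ u ∧ #{x ∈ W | D.Adj w x} ≤ 2 := by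
  by_contra! h
  have hin : ∀ a ∈ W, a ≠ u → ∀ b, D.Adj a b → b ∈ W := fun a ha hau b hab =>
    mem_of_adj_of_degree_le ((hdeg a).trans (h a ha hau)) hab
  obtain ⟨y, hy⟩ : ∃ y, y ∉ W := by simpa [eq_univ_iff_forall] using hW
  obtain ⟨b₁, b₂, hb₁, hb₂, hb, hub₁, hub₂⟩ :=
    exists_two_adj_notMem hconn hbridge (S := W) hu hy fun a ha b hb hab =>
      by_contra fun hau => hb (hin a ha hau b hab)
  obtain ⟨a₁, a₂, ha₁, ha₂, ha, hua₁, hua₂⟩ :=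
    exists_two_adj_notMem hconn hbridge (S := (↑(W.erase u))ᶜ) (x := u) (y := v)
      (by simp) (by simp [hv, hvu]) fun a ha b hb hab => by
        rw [Set.mem_compl_iff, mem_coe] at ha
        rw [Set.mem_compl_iff, not_not, mem_coe, mem_erase] at hb
        by_contra hau
        exact ha (mem_erase.mpr ⟨hau, hin b hb.2 hb.1 a hab.symm⟩)
  rw [Set.mem_compl_iff, not_not, mem_coe, mem_erase] at ha₁ ha₂
  have hsub : ({b₁, b₂, a₁, a₂} : Finset V) ⊆ D.neighborFinset u := by
    intro x hx
    simp only [mem_insert, mem_singleton] at hx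
    rcases hx with rfl | rfl | rfl | rfl <;> simpa
  have hcard : #({b₁, b₂, a₁, a₂} : Finset V) = 4 := by grind
  have := card_le_card hsub
  rw [card_neighborFinset_eq_degree, hcard] at this
  exact absurd (hdeg u) (by omega)

theorem exists_ne_card_filter_adj_le_two_and_connectedIn_erase (hconn : D.Connected)
    (hdeg : ∀ v, D.degree v ≤ 3) (hbridge : ∀ e ∈ D.edgeSet, ¬ D.IsBridge e) (W : Finset V)
    (hW : W ≠ univ) (hWc : D.ConnectedIn W) {u v : V} (hu : u ∈ W) (hv : v ∈ W) (hvu : v ≠ u) :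
    ∃ w ∈ W, w ≠ u ∧ #{x ∈ W | D.Adj w x} ≤ 2 ∧ D.ConnectedIn (W.erase w : Finset V) := by
  induction W using Finset.strongInduction generalizing u v with
  | H W ih =>
  obtain ⟨w₀, hw₀, hw₀u, hdeg₀⟩ :=
    exists_ne_card_filter_adj_le_two hconn hdeg hbridge hW hu hv hvu
  by_cases hcut : D.ConnectedIn (W.erase w₀ : Finset V)
  · exact ⟨w₀, hw₀, hw₀u, hdeg₀, hcut⟩
  obtain ⟨C, hCW, huC, ⟨x, hxC⟩, hC, hCc⟩ :=
    exists_pendant_of_not_connectedIn_erase hWc hw₀ hu hw₀u.symm hcut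
  have hw₀C : w₀ ∉ C := fun h => (mem_erase.mp (hCW h)).1 rfl
  have hCW' : insert w₀ C ⊆ W := insert_subset hw₀ (hCW.trans (erase_subset _ _))
  have hlt : insert w₀ C ⊂ W :=
    (ssubset_iff_of_subset hCW').mpr ⟨u, hu, by simp [hw₀u.symm, huC]⟩
  obtain ⟨w, hw, hww₀, hdegw, hconnw⟩ := ih _ hlt (hlt.trans_le (subset_univ W)).ne hCc
    (mem_insert_self w₀ C) (mem_insert_of_mem hxC) (fun h => hw₀C (h ▸ hxC))
  have hwC : w ∈ C := (mem_insert.mp hw).resolve_left hww₀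
  refine ⟨w, hCW' hw, fun h => huC (h ▸ hwC), le_trans (card_le_card fun y hy => ?_) hdegw,
    connectedIn_erase_of_pendant hWc hw₀ hCW hC hwC hconnw⟩
  obtain ⟨hyW, hwy⟩ := mem_filter.mp hy
  refine mem_filter.mpr ⟨?_, hwy⟩
  by_cases hyw₀ : y = w₀
  · exact hyw₀ ▸ mem_insert_self w₀ C
  · exact mem_insert_of_mem (hC w hwC y hyW hyw₀ hwy)

theorem exists_isBuildOrder (hconn : D.Connected) (hdeg : ∀ v, D.degree v ≤ 3)
    (hbridge : ∀ e ∈ D.edgeSet, ¬ D.IsBridge e) (U : Finset V) (hU : U ≠ univ)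
    (hUc : D.ConnectedIn U) : ∃ l : List V, l.Nodup ∧ l.toFinset = U ∧ D.IsBuildOrder l := by
  induction U using Finset.strongInduction with
  | H U ih =>
  obtain ⟨u, hu⟩ := hUc.1
  by_cases hUu : ∃ v ∈ U, v ≠ u
  · obtain ⟨v, hv, hvu⟩ := hUu
    obtain ⟨w, hw, -, hdegw, hconnw⟩ :=
      exists_ne_card_filter_adj_le_two_and_connectedIn_erase hconn hdeg hbridge U hU hUc hu hv hvu
    have hlt : U.erase w ⊂ U := erase_ssubset hw
    obtain ⟨l, hnd, hlU, hl⟩ := ih _ hlt (hlt.trans_le (subset_univ U)).ne hconnw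
    have hwl : w ∉ l := fun h => (mem_erase.mp (hlU ▸ List.mem_toFinset.mpr h)).1 rfl
    have hlwU : (l ++ [w]).toFinset = U := by
      rw [List.toFinset_append, hlU]
      simp [hw]
    refine ⟨l ++ [w], hnd.append (List.nodup_singleton w) (by simpa using hwl), hlwU,
      hl.append_singleton ?_ ?_⟩
    · exact hlwU ▸ hUc
    · calc (l.filter (fun x => D.Adj w x)).length = #{x ∈ U.erase w | D.Adj w x} := by
            rw [← hlU, ← List.toFinset_card_of_nodup (hnd.filter _), List.toFinset_filter]
            simp only [decide_eq_true_eq]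
        _ ≤ #{x ∈ U | D.Adj w x} := card_le_card (filter_subset_filter _ (erase_subset _ _))
        _ ≤ 2 := hdegw
  · push Not at hUu
    have hU1 : U = {u} := eq_singleton_iff_unique_mem.mpr ⟨hu, hUu⟩
    have hlU : ([] ++ [u]).toFinset = U := by simp [hU1]
    exact ⟨[] ++ [u], List.nodup_singleton u, hlU,
      isBuildOrder_nil.append_singleton (hlU ▸ hUc) (by simp)⟩

end Fintype

end SimpleGraph

/-- in a connected bridgeless graph `D` of maximum degree at most 3,
every proper vertex subset `U` inducing a connected subgraph admits an ordering
`u_1, …, u_k` such that each prefix induces a connected subgraph in which the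
last added vertex has degree at most 2. -/
theorem stmt_6 {V : Type} [Fintype V] [DecidableEq V]
    (D : SimpleGraph V) [DecidableRel D.Adj]
    (hconn : D.Connected)
    (hdeg : ∀ v, D.degree v ≤ 3)
    (hbridge : ∀ e ∈ D.edgeSet, ¬ D.IsBridge e)
    (U : Finset V) (hU : U ⊂ univ)
    (hUconn : (D.induce (U : Set V)).Connected) :
    ∃ l : List V, l.Nodup ∧ l.toFinset = U ∧
      ∀ i (hi : i < l.length),
        (D.induce {v | v ∈ l.take (i + 1)}).Connected ∧
        ((l.take i).filter (fun w => D.Adj (l.get ⟨i, hi⟩) w)).length ≤ 2 :=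
  D.exists_isBuildOrder hconn hdeg hbridge U hU.ne
    (SimpleGraph.connectedIn_iff_connected_induce.mpr hUconn)
end

section
/- Let G be a planar Tanner graph of a code with minimum distance d, and suppose the dual C†(G) of its check graph contains a connected induced subgraph on a proper vertex subset U that is codeword-supporting. Then d ≤ |U| + 3. -/
/-!
Grow `U` one face at a time along edges of its connected induced subgraph: a new face shares
two of its three check nodes with an adjacent face already present, so it adds at most one new
check node, and `|V^c_U| ≤ |U| + 2`. Any `|V^c_U| + 1` bit nodes of `I(V^c_U)` have columns
supported on the `|V^c_U|` rows of `V^c_U`, so they are linearly dependent, and a dependency is a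
nonzero codeword of weight at most `|V^c_U| + 1`.
-/

open Finset

namespace SimpleGraph

variable {V : Type*} {G : SimpleGraph V}

theorem Connected.exists_adj_of_induce {U T : Set V} (hU : (G.induce U).Connected)
    (hTU : T ⊆ U) (hT : T.Nonempty) (hUT : ¬U ⊆ T) : ∃ x ∈ T, ∃ y ∈ U \ T, G.Adj x y := by
  obtain ⟨a, ha⟩ := hT
  obtain ⟨b, hbU, hbT⟩ := Set.not_subset.mp hUT
  obtain ⟨p⟩ := hU.preconnected ⟨a, hTU ha⟩ ⟨b, hbU⟩
  obtain ⟨d, -, hd₁, hd₂⟩ := p.exists_boundary_dart {z : U | z.1 ∈ T} ha hbT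
  exact ⟨d.fst, hd₁, d.snd, ⟨d.snd.2, hd₂⟩, d.adj⟩

variable [DecidableEq V] {α : Type*} [DecidableEq α] (G) {s : V → Finset α}

theorem card_biUnion_insert_le_of_adj (hs : ∀ v w, G.Adj v w → #(s w \ s v) ≤ 1)
    {T : Finset V} {x y : V} (hx : x ∈ T) (hxy : G.Adj x y) :
    #((insert y T).biUnion s) ≤ #(T.biUnion s) + 1 := by
  rw [biUnion_insert, ← card_sdiff_add_card]
  have hnew : #(s y \ T.biUnion s) ≤ #(s y \ s x) :=
    card_le_card (sdiff_subset_sdiff le_rfl (subset_biUnion_of_mem s hx))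
  have := hs x y hxy
  omega

theorem card_biUnion_le_of_induce_connected {k : ℕ} (hk : ∀ v, #(s v) ≤ k + 1)
    (hs : ∀ v w, G.Adj v w → #(s w \ s v) ≤ 1) {U : Finset V}
    (hU : (G.induce (U : Set V)).Connected) : #(U.biUnion s) ≤ #U + k := by
  obtain ⟨⟨v₀, hv₀⟩⟩ := hU.nonempty
  suffices h : ∀ j, 1 ≤ j → j ≤ #U → ∃ T ⊆ U, #T = j ∧ #(T.biUnion s) ≤ j + k by
    obtain ⟨T, hTU, hT, hbound⟩ := h #U (card_pos.mpr ⟨v₀, hv₀⟩) le_rfl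
    rwa [eq_of_subset_of_card_le hTU hT.ge] at hbound
  intro j hj
  induction j, hj using Nat.le_induction with
  | base =>
    intro _
    exact ⟨{v₀}, by simpa using hv₀, card_singleton v₀, by simpa [add_comm] using hk v₀⟩
  | succ j hj ih =>
    intro hjU
    obtain ⟨T, hTU, hT, hbound⟩ := ih (by omega)
    have hUT : ¬(U : Set V) ⊆ T := fun h => by
      have := card_le_card (coe_subset.mp h); omega
    obtain ⟨x, hx, y, ⟨hyU, hyT⟩, hxy⟩ := hU.exists_adj_of_induce (coe_subset.mpr hTU)
      (by simpa using card_pos.mp (by omega : 0 < #T)) hUT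
    refine ⟨insert y T, insert_subset hyU hTU, by rw [card_insert_of_notMem hyT, hT], ?_⟩
    have := card_biUnion_insert_le_of_adj G hs hx hxy
    omega

end SimpleGraph

theorem Matrix.exists_mulVec_eq_zero_of_card_lt {K ι κ : Type*} [Field K] [Fintype ι]
    [Fintype κ] (H : Matrix ι κ K) {S : Finset ι} {J : Finset κ}
    (hJ : ∀ b ∈ J, ∀ c ∉ S, H c b = 0) (hcard : #S < #J) :
    ∃ x : κ → K, x ≠ 0 ∧ H.mulVec x = 0 ∧ ∀ b ∉ J, x b = 0 := by
  classical
  let v : κ → S → K := fun b c => H c b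
  have hdep : ¬LinearIndepOn K v J := fun hv => by
    have := LinearIndependent.fintype_card_le_finrank hv
    simp only [coe_sort_coe, Fintype.card_coe, Module.finrank_fintype_fun_eq_card] at this
    omega
  obtain ⟨g, hg, b₀, hb₀, hgb₀⟩ := not_linearIndepOn_finset_iff.mp hdep
  refine ⟨fun b => if b ∈ J then g b else 0, fun h => hgb₀ ?_, ?_, fun b hb => if_neg hb⟩
  · simpa [hb₀] using congrFun h b₀
  · funext c
    simp only [mulVec, dotProduct, mul_ite, mul_zero, sum_ite_mem, univ_inter, Pi.zero_apply]
    by_cases hc : c ∈ S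
    · simpa [v, mul_comm] using congrFun hg ⟨c, hc⟩
    · exact sum_eq_zero fun b hb => by rw [hJ b hb c hc, zero_mul]

theorem IsMinDist.le_card_add_one {m n : ℕ} {H : Matrix (Fin m) (Fin n) (ZMod 2)} {d : ℕ}
    (hd : IsMinDist H d) {S : Finset (Fin m)} (hS : #S < #{b | colSupp H b ⊆ S}) :
    d ≤ #S + 1 := by
  obtain ⟨J, hJI, hJ⟩ := exists_subset_card_eq (show #S + 1 ≤ #{b | colSupp H b ⊆ S} by omega)
  have hzero : ∀ b ∈ J, ∀ c ∉ S, H c b = 0 := fun b hb c hc => by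
    by_contra hcb
    exact hc ((mem_filter.mp (hJI hb)).2 (by simpa [colSupp] using hcb))
  obtain ⟨x, hx, hHx, hxJ⟩ := H.exists_mulVec_eq_zero_of_card_lt hzero (by omega)
  calc d ≤ wt x := hd.2 x hx hHx
    _ ≤ #J := card_le_card fun b hb => by_contra fun hbJ => (mem_filter.mp hb).2 (hxJ b hbJ)
    _ = #S + 1 := hJ

/-- `D` plays the dual `C†(G)`: its vertices are the triangular faces of the check graph, and
`Vc f` is the set of check nodes of the face `f`. -/
theorem stmt_8_general {m n : ℕ} (H : Matrix (Fin m) (Fin n) (ZMod 2)) (d : ℕ)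
    (hd : IsMinDist H d)
    (F : Type) [Fintype F] [DecidableEq F]
    (D : SimpleGraph F)
    (Vc : F → Finset (Fin m)) (hVc : ∀ f, (Vc f).card = 3)
    (hshare : ∀ f g, D.Adj f g → (Vc f ∩ Vc g).card = 2)
    (U : Finset F)
    (hUconn : (D.induce (U : Set F)).Connected)
    (hcs : (U.biUnion Vc).card <
      (univ.filter (fun b => colSupp H b ⊆ U.biUnion Vc)).card) :
    d ≤ U.card + 3 := by
  have hstep : ∀ f g, D.Adj f g → #(Vc g \ Vc f) ≤ 1 := fun f g hfg => by
    have := card_sdiff_add_card_inter (Vc g) (Vc f)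
    rw [hshare g f hfg.symm, hVc g] at this
    omega
  have hVU := D.card_biUnion_le_of_induce_connected (k := 2) (fun f => (hVc f).le) hstep hUconn
  have := hd.le_card_add_one hcs
  omega

/-- `D` is the dual of the (maximal planar) check graph of a planar
Tanner graph `H`: a connected bridgeless cubic graph whose vertices are the
triangular faces, face `f` having check-node set `Vc f` of size 3, adjacent
faces sharing exactly 2 check nodes.  If a proper subset `U` of faces induces a
connected subgraph and is codeword-supporting (the check nodes `V^c_U = ⋃_{f∈U} Vc f`
induce more than `|V^c_U|` bit nodes), then `d ≤ |U| + 3`. -/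
theorem stmt_8 {m n : ℕ} (H : Matrix (Fin m) (Fin n) (ZMod 2)) (d : ℕ)
    (hd : IsMinDist H d)
    (F : Type) [Fintype F] [DecidableEq F]
    (D : SimpleGraph F) [DecidableRel D.Adj]
    (hconn : D.Connected)
    (hcubic : ∀ f, D.degree f = 3)
    (hbridge : ∀ e ∈ D.edgeSet, ¬ D.IsBridge e)
    (Vc : F → Finset (Fin m)) (hVc : ∀ f, (Vc f).card = 3)
    (hshare : ∀ f g, D.Adj f g → (Vc f ∩ Vc g).card = 2)
    (U : Finset F) (hU : U ⊂ univ)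
    (hUconn : (D.induce (U : Set F)).Connected)
    (hcs : (U.biUnion Vc).card <
      (univ.filter (fun b => colSupp H b ⊆ U.biUnion Vc)).card) :
    d ≤ U.card + 3 :=
  stmt_8_general H d hd F D Vc hVc hshare U hUconn hcs
end
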